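/- arXiv:2104.03692 — 7 statements merged into one kernel-verified Lean document; each statement's English description precedes it below -/
import Mathlib

section
/- The delegative Banzhaf measure satisfies monotonicity with respect to direct delegations: given two liquid democracy elections E and E' on the same digraph, weights and quota, differing only in that some voter j (with j not lying on the delegation chain from i to i's guru in E) delegates directly to i in E' (d'(j)=i) while d'(l)=d(l) for all l≠j, we have DB_i(E') ≥ DB_i(E). -/
open Finset
open scoped Classical

/-- Total weight of voters in `C` whose entire delegation chain (the iterates of `d`)
stays inside `C` (the "active" voters). -/
noncomputable def gamma {V : Type*} [Fintype V] (w : V → ℕ) (d : V → V) (C : Finset V) : ℕ :=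
  ∑ i ∈ C, if ∀ k : ℕ, d^[k] i ∈ C then w i else 0

/-- A coalition wins iff its active weight meets the quota. -/
def wins {V : Type*} [Fintype V] (w : V → ℕ) (d : V → V) (q : ℕ) (C : Finset V) : Prop :=
  q ≤ gamma w d C

/-- Voter `i` is a swing agent for coalition `C`. -/
noncomputable def swing {V : Type*} [Fintype V] (w : V → ℕ) (d : V → V) (q : ℕ)
    (i : V) (C : Finset V) : Prop :=
  ¬ wins w d q C ∧ wins w d q (insert i C)

/-- Number of coalitions `C ⊆ V \ {i}` for which `i` is a swing agent. -/
noncomputable def swingCount {V : Type*} [Fintype V] (w : V → ℕ) (d : V → V) (q : ℕ)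
    (i : V) : ℕ :=
  (((univ : Finset V).erase i).powerset.filter (fun C => swing w d q i C)).card

/-- Delegative Banzhaf measure. -/
noncomputable def DB {V : Type*} [Fintype V] (w : V → ℕ) (d : V → V) (q : ℕ) (i : V) : ℚ :=
  (swingCount w d q i : ℚ) / 2 ^ (Fintype.card V - 1)

/-- Delegative Shapley-Shubik index. -/
noncomputable def DS {V : Type*} [Fintype V] (w : V → ℕ) (d : V → V) (q : ℕ) (i : V) : ℚ :=
  ∑ C ∈ ((univ : Finset V).erase i).powerset,
    if swing w d q i C then
      (Nat.factorial C.card * Nat.factorial (Fintype.card V - C.card - 1) : ℚ) /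
        Nat.factorial (Fintype.card V)
    else 0

/-!
If `i` is a swing agent for `C` in `E`, then `i`'s whole delegation chain lies in `C ∪ {i}`.
Passing from `d` to `d'` cannot activate a voter of `C` (with `i ∉ C`): a `d'`-chain inside `C`
never reaches `j`, since `d' j = i`, so it is the `d`-chain. Nor can it deactivate a voter of
`C ∪ {i}`: a `d'`-chain follows the `d`-chain until it hits `j` and then continues along the
`d`-chain of `i`, which avoids `j`. Hence every swing coalition of `E` is one of `E'`.
-/

section Redelegation

variable {V : Type*} {d d' : V → V} {j : V}

theorem iterate_eq_of_iterate_mem (hsame : ∀ l, l ≠ j → d' l = d l) {C : Finset V}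
    (hjC : d' j ∉ C) {v : V} (hv : ∀ k, d'^[k] v ∈ C) (k : ℕ) : d'^[k] v = d^[k] v := by
  induction k with
  | zero => rfl
  | succ k ih =>
    have hne : d'^[k] v ≠ j := fun h =>
      hjC (by simpa only [Function.iterate_succ_apply', h] using hv (k + 1))
    rw [Function.iterate_succ_apply', Function.iterate_succ_apply', hsame _ hne, ih]

theorem iterate_eq_or_eq_iterate {i : V} (hnotchain : ∀ k, d^[k] i ≠ j) (hdj : d' j = i)
    (hsame : ∀ l, l ≠ j → d' l = d l) (v : V) (k : ℕ) :
    d'^[k] v = d^[k] v ∨ ∃ m, d'^[k] v = d^[m] i := by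
  induction k with
  | zero => exact .inl rfl
  | succ k ih =>
    simp only [Function.iterate_succ_apply']
    rcases ih with h | ⟨m, h⟩
    · by_cases hj : d^[k] v = j
      · exact .inr ⟨0, by rw [h, hj, hdj]; rfl⟩
      · exact .inl (by rw [h, hsame _ hj])
    · exact .inr ⟨m + 1, by rw [h, hsame _ (hnotchain m), Function.iterate_succ_apply']⟩

variable [Fintype V]

theorem gamma_le_gamma_of_chain (w : V → ℕ) {f g : V → V} {C : Finset V}
    (h : ∀ v ∈ C, (∀ k, f^[k] v ∈ C) → ∀ k, g^[k] v ∈ C) :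
    gamma w f C ≤ gamma w g C := by
  unfold gamma
  gcongr with v hv
  split_ifs with hf hg <;> simp_all

theorem gamma_insert_eq_of_iterate_notMem (w : V → ℕ) {i : V} {C : Finset V}
    (hiC : i ∉ C) {m : ℕ} (hm : d^[m] i ∉ insert i C) :
    gamma w d (insert i C) = gamma w d C := by
  have hescape : ∀ v, (∀ k, d^[k] v ∈ insert i C) → ∀ k, d^[k] v ∈ C := by
    intro v hv k
    refine (mem_insert.mp (hv k)).resolve_left fun hk => hm ?_
    have h := hv (m + k)
    rwa [Function.iterate_add_apply, hk] at h
  unfold gamma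
  rw [sum_insert hiC, if_neg fun h => hm (h m), zero_add]
  exact sum_congr rfl fun v _ =>
    if_congr ⟨hescape v, fun h k => mem_insert_of_mem (h k)⟩ rfl rfl

theorem iterate_mem_insert_of_swing {w : V → ℕ} {q : ℕ} {i : V} {C : Finset V}
    (hiC : i ∉ C) (hs : swing w d q i C) (k : ℕ) : d^[k] i ∈ insert i C := by
  by_contra hk
  exact hs.1 (by simpa only [wins, gamma_insert_eq_of_iterate_notMem w hiC hk] using hs.2)

theorem swing_of_redelegate {w : V → ℕ} {q : ℕ} {i : V} (hnotchain : ∀ k, d^[k] i ≠ j)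
    (hdj : d' j = i) (hsame : ∀ l, l ≠ j → d' l = d l) {C : Finset V} (hiC : i ∉ C)
    (hs : swing w d q i C) : swing w d' q i C := by
  have hC : gamma w d' C ≤ gamma w d C :=
    gamma_le_gamma_of_chain w fun v _ hv k =>
      iterate_eq_of_iterate_mem hsame (hdj ▸ hiC) hv k ▸ hv k
  have hins : gamma w d (insert i C) ≤ gamma w d' (insert i C) :=
    gamma_le_gamma_of_chain w fun v _ hv k => by
      rcases iterate_eq_or_eq_iterate hnotchain hdj hsame v k with h | ⟨m, h⟩
      · exact h ▸ hv k
      · exact h ▸ iterate_mem_insert_of_swing hiC hs m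
  exact ⟨fun h => hs.1 (h.trans hC), hs.2.trans hins⟩

theorem swingCount_le_of_redelegate (w : V → ℕ) (q : ℕ) {i : V}
    (hnotchain : ∀ k, d^[k] i ≠ j) (hdj : d' j = i) (hsame : ∀ l, l ≠ j → d' l = d l) :
    swingCount w d q i ≤ swingCount w d' q i := by
  refine card_le_card fun C hC => ?_
  rw [mem_filter, mem_powerset] at hC ⊢
  exact ⟨hC.1, swing_of_redelegate hnotchain hdj hsame (fun hi => by simpa using hC.1 hi) hC.2⟩

end Redelegation

theorem stmt2_general {V : Type*} [Fintype V] (w : V → ℕ) (q : ℕ) (d d' : V → V) (i j : V)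
    (hnotchain : ∀ k, d^[k] i ≠ j)
    (hdj : d' j = i)
    (hsame : ∀ l, l ≠ j → d' l = d l) :
    DB w d q i ≤ DB w d' q i := by
  unfold DB
  gcongr
  exact swingCount_le_of_redelegate w q hnotchain hdj hsame

/-- Monotonicity w.r.t. direct delegations (MDD) for the delegative
Banzhaf measure: if E' differs from E only in that voter j (not on i's delegation
chain in E) delegates directly to i, then DB_i(E') ≥ DB_i(E). -/
theorem stmt2 {V : Type*} [Fintype V] (w : V → ℕ) (q : ℕ) (d d' : V → V) (i j : V)
    (hacyc : ∀ v, ∃ k, d (d^[k] v) = d^[k] v)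
    (hacyc' : ∀ v, ∃ k, d' (d'^[k] v) = d'^[k] v)
    (hnotchain : ∀ k, d^[k] i ≠ j)
    (hdj : d' j = i)
    (hsame : ∀ l, l ≠ j → d' l = d l) :
    DB w d q i ≤ DB w d' q i :=
  stmt2_general w q d d' i j hnotchain hdj hsame
end

section
/- The delegative Shapley-Shubik index satisfies monotonicity with respect to direct delegations: given two elections E and E' differing only in that voter j (not on the delegation chain from i to i's guru in E) delegates directly to i in E', we have DS_i(E') ≥ DS_i(E). -/
open Finset
open scoped Classical

/-! `gamma` adds up the weights of the voters whose whole delegation chain stays in the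
coalition (the active voters). Redirecting `j` to `i` cannot create active voters
in a coalition `C ∌ i`, since a chain through `j` continues to `i`. When `i` is a swing agent
for `C` under `d`, it is active in `C ∪ {i}` (otherwise adding it changes nothing), and then
the set of `d`-active voters of `C ∪ {i}` is closed under `d'`, so each of them stays active.
Hence `i` is still a swing agent for `C` under `d'`, and every term of the index can only
grow. -/

def activeVoters {V : Type*} (d : V → V) (C : Set V) : Set V :=
  {v | ∀ k, d^[k] v ∈ C}

section activeVoters

variable {V : Type*} {d : V → V} {C S : Set V}

theorem activeVoters_subset : activeVoters d C ⊆ C :=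
  fun _ hv => hv 0

theorem mapsTo_activeVoters : Set.MapsTo d (activeVoters d C) (activeVoters d C) := by
  intro v hv k
  rw [← Function.iterate_succ_apply]
  exact hv (k + 1)

theorem subset_activeVoters_of_mapsTo (hS : Set.MapsTo d S S) (hSC : S ⊆ C) :
    S ⊆ activeVoters d C :=
  fun _ hv k => hSC (hS.iterate k hv)

end activeVoters

theorem gamma_eq_sum_activeVoters {V : Type*} [Fintype V] (w : V → ℕ) (d : V → V)
    (C : Finset V) : gamma w d C = ∑ v ∈ C with v ∈ activeVoters d C, w v := by
  rw [gamma, sum_filter]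
  rfl

theorem gamma_le_gamma {V : Type*} [Fintype V] (w : V → ℕ) {d d' : V → V} {C C' : Finset V}
    (h : activeVoters d C ⊆ activeVoters d' C') : gamma w d C ≤ gamma w d' C' := by
  rw [gamma_eq_sum_activeVoters, gamma_eq_sum_activeVoters]
  refine sum_le_sum_of_subset fun v hv => ?_
  rw [mem_filter] at hv ⊢
  exact ⟨activeVoters_subset (h hv.2), h hv.2⟩

section redirect

variable {V : Type*} [Fintype V] (w : V → ℕ) {d d' : V → V} {i j : V}

theorem gamma_redirect_le (hdj : d' j = i) (hsame : ∀ l, l ≠ j → d' l = d l) {C : Finset V}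
    (hiC : i ∉ C) : gamma w d' C ≤ gamma w d C := by
  refine gamma_le_gamma w (subset_activeVoters_of_mapsTo ?_ activeVoters_subset)
  have hj : j ∉ activeVoters d' C := fun hj => hiC (hdj ▸ hj 1)
  refine mapsTo_activeVoters.congr fun v hv => hsame v ?_
  rintro rfl
  exact hj hv

theorem le_gamma_redirect (hdj : d' j = i) (hsame : ∀ l, l ≠ j → d' l = d l) {D : Finset V}
    (hi : i ∈ activeVoters d D) : gamma w d D ≤ gamma w d' D := by
  refine gamma_le_gamma w (subset_activeVoters_of_mapsTo (fun v hv => ?_) activeVoters_subset)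
  by_cases hvj : v = j
  · rw [hvj, hdj]
    exact hi
  · rw [hsame v hvj]
    exact mapsTo_activeVoters hv

end redirect

theorem gamma_insert_le_of_not_mem_activeVoters {V : Type*} [Fintype V] (w : V → ℕ)
    {d : V → V} {i : V} {C : Finset V} (hi : i ∉ activeVoters d ↑(insert i C)) :
    gamma w d (insert i C) ≤ gamma w d C := by
  refine gamma_le_gamma w (subset_activeVoters_of_mapsTo mapsTo_activeVoters fun v hv => ?_)
  have hvC := activeVoters_subset hv
  rw [coe_insert, Set.mem_insert_iff] at hvC
  exact hvC.resolve_left fun hvi => hi (by rwa [hvi] at hv)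

theorem mem_activeVoters_of_swing {V : Type*} [Fintype V] {w : V → ℕ} {d : V → V} {q : ℕ}
    {i : V} {C : Finset V} (hs : swing w d q i C) : i ∈ activeVoters d ↑(insert i C) := by
  by_contra hi
  exact hs.1 (hs.2.trans (gamma_insert_le_of_not_mem_activeVoters w hi))

theorem swing_redirect {V : Type*} [Fintype V] {w : V → ℕ} {d d' : V → V} {q : ℕ} {i j : V}
    (hdj : d' j = i) (hsame : ∀ l, l ≠ j → d' l = d l) {C : Finset V} (hiC : i ∉ C)
    (hs : swing w d q i C) : swing w d' q i C :=
  ⟨fun hwin => hs.1 (hwin.trans (gamma_redirect_le w hdj hsame hiC)),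
    hs.2.trans (le_gamma_redirect w hdj hsame (mem_activeVoters_of_swing hs))⟩

theorem stmt3_general {V : Type*} [Fintype V] (w : V → ℕ) (q : ℕ) (d d' : V → V) (i j : V)
    (hdj : d' j = i)
    (hsame : ∀ l, l ≠ j → d' l = d l) :
    DS w d q i ≤ DS w d' q i := by
  rw [DS, DS, ← sum_filter, ← sum_filter]
  refine sum_le_sum_of_subset_of_nonneg (fun C hC => ?_) fun _ _ _ => by positivity
  rw [mem_filter, mem_powerset] at hC ⊢
  exact ⟨hC.1, swing_redirect hdj hsame (fun hi => by simpa using hC.1 hi) hC.2⟩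

/-- Monotonicity w.r.t. direct delegations (MDD) for the delegative
Shapley-Shubik index: if E' differs from E only in that voter j (not on i's
delegation chain in E) delegates directly to i, then DS_i(E') ≥ DS_i(E). -/
theorem stmt3 {V : Type*} [Fintype V] (w : V → ℕ) (q : ℕ) (d d' : V → V) (i j : V)
    (hacyc : ∀ v, ∃ k, d (d^[k] v) = d^[k] v)
    (hacyc' : ∀ v, ∃ k, d' (d'^[k] v) = d'^[k] v)
    (hnotchain : ∀ k, d^[k] i ≠ j)
    (hdj : d' j = i)
    (hsame : ∀ l, l ≠ j → d' l = d l) :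
    DS w d q i ≤ DS w d' q i :=
  stmt3_general w q d d' i j hdj hsame
end

section
/- In a delegative simple game, for any pair of voters i,j with d(i)=j (i delegates directly to j), the delegative Banzhaf measure satisfies DB_i ≤ DB_j. -/
/-!
If `i` is a swing agent for `C`, then `j = d i` must lie in `C`: otherwise nobody whose chain
passes through `i` is active in `C ∪ {i}`, so adding `i` would gain no weight. Exchanging `i` and
`j` then makes `j` a swing agent for `(C ∪ {i}) \ {j}`: this coalition is contained in `C` up to
the inactive voter `i`, hence still loses, and adding `j` to it gives the winning `C ∪ {i}`.
The exchange is injective, so `i` has at most as many swing coalitions as `j`.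
-/

open Finset
open scoped Classical

lemma injOn_insert_erase {V : Type*} [DecidableEq V] (i j : V) :
    Set.InjOn (fun C : Finset V => insert i (C.erase j)) {C | i ∉ C ∧ j ∈ C} := by
  rintro C₁ ⟨hi₁, hj₁⟩ C₂ ⟨hi₂, hj₂⟩ heq
  have herase : C₁.erase j = C₂.erase j := by
    rw [← erase_insert (fun h => hi₁ (mem_of_mem_erase h)),
      ← erase_insert (fun h => hi₂ (mem_of_mem_erase h))]
    exact congrArg (erase · i) heq
  rw [← insert_erase hj₁, herase, insert_erase hj₂]

section DelegativeGame

variable {V : Type*} [Fintype V] (w : V → ℕ) (d : V → V)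

lemma gamma_eq_sum_filter (C : Finset V) :
    gamma w d C = ∑ v ∈ C with ∀ k, d^[k] v ∈ C, w v :=
  (sum_filter _ _).symm

lemma gamma_mono {C D : Finset V} (h : C ⊆ D) : gamma w d C ≤ gamma w d D := by
  rw [gamma_eq_sum_filter, gamma_eq_sum_filter]
  refine sum_le_sum_of_subset fun v hv => ?_
  simp only [mem_filter] at hv ⊢
  exact ⟨h hv.1, fun k => h (hv.2 k)⟩

/-- A voter whose chain passes through `i` would next need `d i`, so `i` activates nobody. -/
lemma gamma_insert_le_of_delegate_not_mem {i : V} {C : Finset V} (h : d i ∉ insert i C) :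
    gamma w d (insert i C) ≤ gamma w d C := by
  rw [gamma_eq_sum_filter, gamma_eq_sum_filter]
  refine sum_le_sum_of_subset fun v hv => ?_
  simp only [mem_filter] at hv ⊢
  have hchain : ∀ k, d^[k] v ∈ C := fun k => by
    refine (mem_insert.mp (hv.2 k)).resolve_left fun hk => h ?_
    simpa [Function.iterate_succ_apply', hk] using hv.2 (k + 1)
  exact ⟨hchain 0, hchain⟩

variable (q : ℕ)

lemma delegate_mem_of_swing {i : V} {C : Finset V} (hsw : swing w d q i C) :
    d i ∈ insert i C := by
  by_contra h
  exact hsw.1 (hsw.2.trans (gamma_insert_le_of_delegate_not_mem w d h))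

lemma swing_delegate_insert_erase {i : V} (hne : i ≠ d i) {C : Finset V}
    (hjC : d i ∈ C) (hsw : swing w d q i C) :
    swing w d q (d i) (insert i (C.erase (d i))) := by
  constructor
  · intro hwin
    refine hsw.1 (hwin.trans ?_)
    have hj : d i ∉ insert i (C.erase (d i)) := by simp [Ne.symm hne]
    exact (gamma_insert_le_of_delegate_not_mem w d hj).trans (gamma_mono w d (erase_subset _ _))
  · have hinsert : insert (d i) (insert i (C.erase (d i))) = insert i C := by
      rw [insert_comm, insert_erase hjC]
    rw [wins, hinsert]
    exact hsw.2

lemma swingCount_le_swingCount_delegate (i : V) : swingCount w d q i ≤ swingCount w d q (d i) := by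
  by_cases hne : i = d i
  · rw [← hne]
  have hswings : ∀ C ∈ ((univ : Finset V).erase i).powerset.filter (swing w d q i),
      (i ∉ C ∧ d i ∈ C) ∧ swing w d q i C := by
    intro C hC
    simp only [mem_filter, mem_powerset, subset_erase, subset_univ, true_and] at hC
    have hjC := (mem_insert.mp (delegate_mem_of_swing w d q hC.2)).resolve_left (Ne.symm hne)
    exact ⟨⟨hC.1, hjC⟩, hC.2⟩
  refine card_le_card_of_injOn (fun C => insert i (C.erase (d i))) (fun C hC => ?_)
    (fun C₁ h₁ C₂ h₂ => injOn_insert_erase i (d i) (hswings C₁ h₁).1 (hswings C₂ h₂).1)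
  obtain ⟨⟨-, hjC⟩, hsw⟩ := hswings C hC
  simp only [coe_filter, mem_powerset, subset_erase, subset_univ, true_and]
  exact ⟨by simp [Ne.symm hne], swing_delegate_insert_erase w d q hne hjC hsw⟩

end DelegativeGame

theorem stmt7_general {V : Type*} [Fintype V] (w : V → ℕ) (q : ℕ) (d : V → V)
    (i j : V) (hij : d i = j) :
    DB w d q i ≤ DB w d q j := by
  subst hij
  unfold DB
  gcongr
  exact swingCount_le_swingCount_delegate w d q i

/-- In a delegative simple game, if voter i delegates directly to
voter j (d(i) = j), then DB_i ≤ DB_j. -/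
theorem stmt7 {V : Type*} [Fintype V] (w : V → ℕ) (q : ℕ) (d : V → V)
    (hacyc : ∀ v, ∃ k, d (d^[k] v) = d^[k] v)
    (i j : V) (hij : d i = j) :
    DB w d q i ≤ DB w d q j :=
  stmt7_general w q d i j hij
end

section
/- Trimming lemma for budgeted trees: let T be a tree rooted at r in a graph that is B-proper for r (every vertex reachable from r at cost at most B), with vertex prizes p' ≥ 0 and vertex costs c' ≥ 0, prize-to-cost ratio γ = p'(T)/c'(T), and suppose ε ∈ (0,1] and c'(T) ≥ εB/2. Then there exists a subtree T* of T containing r with prize-to-cost ratio at least εγ/4 and cost εB/2 ≤ c'(T*) ≤ (1+ε)B. -/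
/-!
Peel the tree from below. With `b = εB/2`, take a vertex `v` whose subtree costs at least `b`
while every child subtree costs less. Either a greedy group of child subtrees or the whole subtree
of `v` is a piece `D` with `b ≤ c'(D) ≤ B + b`, and `D` together with the root path of `v` is a
subtree `S` of cost at most `(1 + ε)B`. With `γ` the ratio of the whole tree, if
`p'(D) ≥ (εγ/4)(B + c'(D))` then `S` has ratio at least `εγ/4`. Otherwise `D` is cut off, losing
prize at most `κ c'(D)` with `κ = (2 + ε)γ/4`, because `B ≤ (2/ε) c'(D)`. If the peeling never
stops early, the remaining tree `S` has `p'(S) ≥ p'(T) - κ (c'(T) - c'(S)) ≥ κ c'(S)`, as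
`κ c'(T) ≤ p'(T)`.
-/

open Finset
open scoped Classical
open Function

theorem sum_union_le_sum_add_sum {ι M : Type*} [DecidableEq ι] [AddCommMonoid M] [PartialOrder M]
    [IsOrderedAddMonoid M] {f : ι → M} (hf : ∀ i, 0 ≤ f i) (s t : Finset ι) :
    ∑ i ∈ s ∪ t, f i ≤ ∑ i ∈ s, f i + ∑ i ∈ t, f i := by
  rw [← sum_union_inter]
  exact le_add_of_nonneg_right (sum_nonneg fun i _ => hf i)

theorem exists_subset_le_sum_biUnion_lt {ι α : Type*} [DecidableEq α] {f : α → ℝ}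
    (hf : ∀ x, 0 ≤ f x) {b : ℝ} (hb : 0 < b) (F : ι → Finset α) {s : Finset ι}
    (hsmall : ∀ i ∈ s, ∑ x ∈ F i, f x < b) (hs : b ≤ ∑ x ∈ s.biUnion F, f x) :
    ∃ K ⊆ s, b ≤ ∑ x ∈ K.biUnion F, f x ∧ ∑ x ∈ K.biUnion F, f x < 2 * b := by
  induction s using Finset.induction_on with
  | empty => simp at hs; linarith
  | insert i s _ ih =>
    by_cases hbig : b ≤ ∑ x ∈ s.biUnion F, f x
    · obtain ⟨K, hKs, hK⟩ := ih (fun j hj => hsmall j (mem_insert_of_mem hj)) hbig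
      exact ⟨K, hKs.trans (subset_insert i s), hK⟩
    · refine ⟨insert i s, Subset.rfl, hs, ?_⟩
      rw [biUnion_insert]
      linarith [sum_union_le_sum_add_sum hf (F i) (s.biUnion F), hsmall i (mem_insert_self i s)]

section ParentTree

variable {V : Type*}

def IsDescendant (par : V → V) (u v : V) : Prop := ∃ k, par^[k] u = v

noncomputable def subtreeIn (par : V → V) (T : Finset V) (v : V) : Finset V :=
  T.filter (IsDescendant par · v)

noncomputable def childrenIn (par : V → V) (T : Finset V) (v : V) : Finset V :=
  T.filter fun w => par w = v ∧ w ≠ v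

noncomputable def ancestors [Fintype V] (par : V → V) (v : V) : Finset V :=
  univ.filter (IsDescendant par v)

variable {par : V → V} {r u v w : V}

namespace IsDescendant

theorem refl (par : V → V) (u : V) : IsDescendant par u u := ⟨0, rfl⟩

theorem trans (huv : IsDescendant par u v) (hvw : IsDescendant par v w) :
    IsDescendant par u w := by
  obtain ⟨i, rfl⟩ := huv
  obtain ⟨j, rfl⟩ := hvw
  exact ⟨j + i, iterate_add_apply par j i u⟩

theorem self_par (par : V → V) (u : V) : IsDescendant par u (par u) := ⟨1, rfl⟩

theorem of_par (h : IsDescendant par (par u) v) : IsDescendant par u v :=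
  (self_par par u).trans h

theorem eq_or_par (h : IsDescendant par u v) : u = v ∨ IsDescendant par (par u) v := by
  obtain ⟨_ | k, rfl⟩ := h
  · exact Or.inl rfl
  · exact Or.inr ⟨k, (iterate_succ_apply par k u).symm⟩

end IsDescendant

theorem eq_root_of_isPeriodicPt (hroot : par r = r) (hacyc : ∀ v, IsDescendant par v r) {n : ℕ}
    (hn : 0 < n) (hv : IsPeriodicPt par n v) : v = r := by
  obtain ⟨k, hk⟩ := hacyc v
  calc v = par^[n * k] v := (hv.mul_const k).eq.symm
    _ = par^[n * k - k] (par^[k] v) := by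
      rw [← iterate_add_apply, Nat.sub_add_cancel (Nat.le_mul_of_pos_left k hn)]
    _ = r := by rw [hk, iterate_fixed hroot]

theorem not_isDescendant_of_par_eq (hroot : par r = r) (hacyc : ∀ v, IsDescendant par v r)
    (hw : par w = v) (hne : w ≠ v) : ¬IsDescendant par v w := by
  rintro ⟨k, hk⟩
  have hper : IsPeriodicPt par (k + 1) w := by
    change par^[k + 1] w = w
    rw [iterate_succ_apply, hw, hk]
  have hwr := eq_root_of_isPeriodicPt hroot hacyc k.succ_pos hper
  exact hne (calc w = r := hwr
    _ = par w := by rw [hwr, hroot]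
    _ = v := hw)

theorem root_mem_of_mapsTo (hacyc : ∀ v, IsDescendant par v r) {S : Finset V}
    (hS : Set.MapsTo par S S) (hne : S.Nonempty) : r ∈ S := by
  obtain ⟨u, hu⟩ := hne
  obtain ⟨k, hk⟩ := hacyc u
  exact hk ▸ hS.iterate k hu

section Subtree

variable {T K : Finset V}

theorem mem_subtreeIn : u ∈ subtreeIn par T v ↔ u ∈ T ∧ IsDescendant par u v := mem_filter

theorem subtreeIn_subset : subtreeIn par T v ⊆ T := filter_subset _ _

theorem self_mem_subtreeIn (hv : v ∈ T) : v ∈ subtreeIn par T v :=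
  mem_subtreeIn.2 ⟨hv, .refl par v⟩

theorem subtreeIn_root (hacyc : ∀ v, IsDescendant par v r) : subtreeIn par T r = T :=
  filter_true_of_mem fun u _ => hacyc u

theorem mem_subtreeIn_of_par (hu : u ∈ T) (h : par u ∈ subtreeIn par T v) :
    u ∈ subtreeIn par T v :=
  mem_subtreeIn.2 ⟨hu, (mem_subtreeIn.1 h).2.of_par⟩

theorem subtreeIn_subset_subtreeIn (h : IsDescendant par w v) :
    subtreeIn par T w ⊆ subtreeIn par T v := fun _ hu =>
  mem_subtreeIn.2 ⟨(mem_subtreeIn.1 hu).1, (mem_subtreeIn.1 hu).2.trans h⟩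

theorem subtreeIn_ssubset_of_mem_childrenIn (hroot : par r = r)
    (hacyc : ∀ v, IsDescendant par v r) (hv : v ∈ T) (hw : w ∈ childrenIn par T v) :
    subtreeIn par T w ⊂ subtreeIn par T v := by
  obtain ⟨-, hwv, hne⟩ := mem_filter.1 hw
  refine ssubset_of_subset_of_ne (subtreeIn_subset_subtreeIn (hwv ▸ .self_par par w)) fun h => ?_
  have hv' := self_mem_subtreeIn (par := par) hv
  rw [← h] at hv'
  exact not_isDescendant_of_par_eq hroot hacyc hwv hne (mem_subtreeIn.1 hv').2

theorem subtreeIn_subset_insert_biUnion (hT : Set.MapsTo par T T) :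
    subtreeIn par T v ⊆ insert v ((childrenIn par T v).biUnion (subtreeIn par T)) := by
  intro u hu
  obtain ⟨huT, k, hk⟩ := mem_subtreeIn.1 hu
  clear hu
  induction k generalizing u with
  | zero => exact mem_insert.2 (Or.inl hk)
  | succ k ih =>
    by_cases huv : u = v
    · exact mem_insert.2 (Or.inl huv)
    have hpu : par u ∈ T := hT huT
    rcases mem_insert.1 (ih hpu (by rwa [iterate_succ_apply] at hk)) with hpuv | hpu'
    · exact mem_insert_of_mem (mem_biUnion.2 ⟨u, mem_filter.2 ⟨huT, hpuv, huv⟩,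
        self_mem_subtreeIn huT⟩)
    · obtain ⟨w, hw, hpuw⟩ := mem_biUnion.1 hpu'
      exact mem_insert_of_mem (mem_biUnion.2 ⟨w, hw, mem_subtreeIn_of_par huT hpuw⟩)

theorem mapsTo_biUnion_subtreeIn_union {A : Finset V} (hT : Set.MapsTo par T T)
    (hA : Set.MapsTo par A A) (hK : ∀ w ∈ K, par w ∈ A) :
    Set.MapsTo par ↑(K.biUnion (subtreeIn par T) ∪ A) ↑(K.biUnion (subtreeIn par T) ∪ A) := by
  intro u hu
  rcases mem_union.1 hu with hu | hu
  · obtain ⟨w, hwK, huw⟩ := mem_biUnion.1 hu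
    obtain ⟨huT, hdesc⟩ := mem_subtreeIn.1 huw
    rcases hdesc.eq_or_par with rfl | hpar
    · exact mem_union_right _ (hK u hwK)
    · exact mem_union_left _ (mem_biUnion.2 ⟨w, hwK, mem_subtreeIn.2 ⟨hT huT, hpar⟩⟩)
  · exact mem_union_right _ (hA hu)

theorem mapsTo_sdiff_biUnion_subtreeIn (hT : Set.MapsTo par T T) :
    Set.MapsTo par ↑(T \ K.biUnion (subtreeIn par T)) ↑(T \ K.biUnion (subtreeIn par T)) := by
  intro u hu
  obtain ⟨huT, huD⟩ := mem_sdiff.1 hu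
  refine mem_sdiff.2 ⟨hT huT, fun hpu => huD ?_⟩
  obtain ⟨w, hwK, hpuw⟩ := mem_biUnion.1 hpu
  exact mem_biUnion.2 ⟨w, hwK, mem_subtreeIn_of_par huT hpuw⟩

end Subtree

theorem mem_ancestors [Fintype V] : u ∈ ancestors par v ↔ IsDescendant par v u := by
  simp [ancestors]

theorem mapsTo_ancestors [Fintype V] : Set.MapsTo par (ancestors par v) (ancestors par v) :=
  fun _ hu => mem_ancestors.2 ((mem_ancestors.1 hu).trans (.self_par par _))

section Cost

variable {c p : V → ℝ} {b B : ℝ} {T : Finset V}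

theorem exists_minimal_heavy_vertex (hroot : par r = r) (hacyc : ∀ v, IsDescendant par v r)
    (hr : r ∈ T) (hTb : b ≤ ∑ u ∈ T, c u) :
    ∃ v ∈ T, b ≤ ∑ u ∈ subtreeIn par T v, c u ∧
      ∀ w ∈ childrenIn par T v, ∑ u ∈ subtreeIn par T w, c u < b := by
  obtain ⟨v, hv, hmin⟩ := (T.filter fun v => b ≤ ∑ u ∈ subtreeIn par T v, c u).exists_min_image
    (fun v => (subtreeIn par T v).card) ⟨r, mem_filter.2 ⟨hr, by rwa [subtreeIn_root hacyc]⟩⟩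
  obtain ⟨hvT, hvb⟩ := mem_filter.1 hv
  refine ⟨v, hvT, hvb, fun w hw => ?_⟩
  by_contra! hwb
  exact (card_lt_card (subtreeIn_ssubset_of_mem_childrenIn hroot hacyc hvT hw)).not_ge
    (hmin w (mem_filter.2 ⟨(mem_filter.1 hw).1, hwb⟩))

theorem exists_piece [Fintype V] (hc : ∀ u, 0 ≤ c u) (hT : Set.MapsTo par T T) (hb : 0 < b)
    (hbB : b ≤ B) (hancB : ∑ u ∈ ancestors par v, c u ≤ B)
    (hvb : b ≤ ∑ u ∈ subtreeIn par T v, c u)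
    (hlight : ∀ w ∈ childrenIn par T v, ∑ u ∈ subtreeIn par T w, c u < b) :
    ∃ K : Finset V, (∀ w ∈ K, par w ∈ ancestors par v) ∧
      b ≤ ∑ u ∈ K.biUnion (subtreeIn par T), c u ∧
      ∑ u ∈ K.biUnion (subtreeIn par T), c u ≤ B + b ∧
      ∑ u ∈ K.biUnion (subtreeIn par T) ∪ ancestors par v, c u ≤ B + 2 * b := by
  have hvv : v ∈ ancestors par v := mem_ancestors.2 (.refl par v)
  set E := (childrenIn par T v).biUnion (subtreeIn par T)
  by_cases hE : b ≤ ∑ u ∈ E, c u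
  · obtain ⟨K, hK, hKb, hK2b⟩ := exists_subset_le_sum_biUnion_lt hc hb _ hlight hE
    refine ⟨K, fun w hw => (mem_filter.1 (hK hw)).2.1 ▸ hvv, hKb, by linarith, ?_⟩
    linarith [sum_union_le_sum_add_sum hc (K.biUnion (subtreeIn par T)) (ancestors par v)]
  · rw [not_le] at hE
    have hsub := subtreeIn_subset_insert_biUnion (v := v) hT
    have hcv : c v ≤ B := (single_le_sum (fun u _ => hc u) hvv).trans hancB
    refine ⟨{v}, by simpa using mapsTo_ancestors hvv, by simpa using hvb, ?_, ?_⟩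
    · calc ∑ u ∈ ({v} : Finset V).biUnion (subtreeIn par T), c u ≤ ∑ u ∈ insert v E, c u := by
            rw [singleton_biUnion]
            exact sum_le_sum_of_subset_of_nonneg hsub fun u _ _ => hc u
        _ ≤ c v + ∑ u ∈ E, c u := by
            rw [insert_eq]
            simpa using sum_union_le_sum_add_sum hc {v} E
        _ ≤ B + b := by linarith
    · calc ∑ u ∈ ({v} : Finset V).biUnion (subtreeIn par T) ∪ ancestors par v, c u
            ≤ ∑ u ∈ insert v E ∪ ancestors par v, c u := by
            rw [singleton_biUnion]
            exact sum_le_sum_of_subset_of_nonneg (union_subset_union_left hsub) fun u _ _ => hc u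
        _ = ∑ u ∈ E ∪ ancestors par v, c u := by
            rw [insert_union, insert_eq_of_mem (mem_union_right _ hvv)]
        _ ≤ ∑ u ∈ E, c u + ∑ u ∈ ancestors par v, c u := sum_union_le_sum_add_sum hc _ _
        _ ≤ B + 2 * b := by linarith

theorem exists_peeled_subtree [Fintype V] (hroot : par r = r)
    (hacyc : ∀ v, IsDescendant par v r) (hp : ∀ u, 0 ≤ p u) (hc : ∀ u, 0 ≤ c u)
    (hproper : ∀ v, ∑ u ∈ ancestors par v, c u ≤ B) (hb : 0 < b) (hbB : b ≤ B) {ρ κ : ℝ}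
    (hρ : 0 ≤ ρ) (hρκ : ∀ x, b ≤ x → ρ * (B + x) ≤ κ * x)
    (T : Finset V) (hT : Set.MapsTo par T T) (hTb : b ≤ ∑ u ∈ T, c u) :
    ∃ S : Finset V, Set.MapsTo par S S ∧ b ≤ ∑ u ∈ S, c u ∧ ∑ u ∈ S, c u ≤ B + 2 * b ∧
      (ρ * ∑ u ∈ S, c u ≤ ∑ u ∈ S, p u ∨
        ∑ u ∈ T, p u - ∑ u ∈ S, p u ≤ κ * (∑ u ∈ T, c u - ∑ u ∈ S, c u)) := by
  induction T using Finset.strongInduction with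
  | H T ih =>
  by_cases hsmall : ∑ u ∈ T, c u ≤ B + 2 * b
  · exact ⟨T, hT, hTb, hsmall, Or.inr (by simp)⟩
  rw [not_le] at hsmall
  have hTne : T.Nonempty := nonempty_of_sum_ne_zero (f := c) (by linarith)
  obtain ⟨v, -, hvb, hlight⟩ :=
    exists_minimal_heavy_vertex hroot hacyc (root_mem_of_mapsTo hacyc hT hTne) hTb
  obtain ⟨K, hK, hDb, hDB, hSB⟩ := exists_piece hc hT hb hbB (hproper v) hvb hlight
  set D := K.biUnion (subtreeIn par T)
  have hDT : D ⊆ T := biUnion_subset.2 fun _ _ => subtreeIn_subset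
  by_cases hgood : ρ * (B + ∑ u ∈ D, c u) ≤ ∑ u ∈ D, p u
  · refine ⟨D ∪ ancestors par v, mapsTo_biUnion_subtreeIn_union hT mapsTo_ancestors hK,
      hDb.trans (sum_le_sum_of_subset_of_nonneg subset_union_left fun u _ _ => hc u), hSB,
      Or.inl ?_⟩
    calc ρ * ∑ u ∈ D ∪ ancestors par v, c u ≤ ρ * (B + ∑ u ∈ D, c u) := by
          gcongr
          linarith [sum_union_le_sum_add_sum hc D (ancestors par v), hproper v]
      _ ≤ ∑ u ∈ D, p u := hgood
      _ ≤ ∑ u ∈ D ∪ ancestors par v, p u :=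
          sum_le_sum_of_subset_of_nonneg subset_union_left fun u _ _ => hp u
  rw [not_le] at hgood
  have hDne : D.Nonempty := nonempty_of_sum_ne_zero (f := c) (by linarith)
  have hcD := sum_sdiff_eq_sub (f := c) hDT
  have hpD := sum_sdiff_eq_sub (f := p) hDT
  obtain ⟨S, hS, hSb, hSB, hratio | hloss⟩ := ih (T \ D) (sdiff_ssubset hDT hDne)
    (mapsTo_sdiff_biUnion_subtreeIn hT) (by linarith)
  · exact ⟨S, hS, hSb, hSB, Or.inl hratio⟩
  · refine ⟨S, hS, hSb, hSB, Or.inr ?_⟩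
    rw [hcD, hpD] at hloss
    linarith [hρκ _ hDb]

end Cost

end ParentTree

/-- Trimming lemma for budgeted trees (Bateni–Hajiaghayi–Liaghat).
A tree rooted at `r` is modeled by a parent function `par` on its vertex set with
`par r = r` and every vertex reaching `r` by iterating `par`; a subtree containing
`r` is a parent-closed set containing `r`. If the tree is B-proper for `r` (the
cost of the root-to-v path, i.e., of v's ancestors, is at most B for every v),
ε ∈ (0,1], and the total cost is at least εB/2, then there is a subtree T*
containing r with prize-to-cost ratio at least ε/4 times that of the whole tree
and cost εB/2 ≤ c'(T*) ≤ (1+ε)B. -/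
theorem stmt13 {V : Type*} [Fintype V] (par : V → V) (r : V)
    (hroot : par r = r) (hacyc : ∀ v, ∃ k, par^[k] v = r)
    (p' c' : V → ℝ) (hp : ∀ v, 0 ≤ p' v) (hc : ∀ v, 0 ≤ c' v)
    (B : ℝ) (hB : 0 ≤ B)
    (hproper : ∀ v, ∑ u ∈ (univ : Finset V).filter (fun u => ∃ k, par^[k] v = u), c' u ≤ B)
    (ε : ℝ) (hε0 : 0 < ε) (hε1 : ε ≤ 1)
    (hcost : ε * B / 2 ≤ ∑ v, c' v) :
    ∃ S : Finset V, r ∈ S ∧ (∀ v ∈ S, par v ∈ S) ∧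
      ε * ((∑ v, p' v) / (∑ v, c' v)) / 4 ≤ (∑ v ∈ S, p' v) / (∑ v ∈ S, c' v) ∧
      ε * B / 2 ≤ ∑ v ∈ S, c' v ∧ (∑ v ∈ S, c' v) ≤ (1 + ε) * B := by
  obtain rfl | hB := hB.eq_or_lt
  · have hzero (S : Finset V) : ∑ v ∈ S, c' v = 0 := sum_eq_zero fun v _ =>
      ((single_le_sum (fun u _ => hc u) (mem_ancestors.2 (.refl par v))).trans (hproper v)).antisymm
        (hc v)
    exact ⟨univ, mem_univ r, fun v _ => mem_univ _, by simp [hzero]⟩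
  set γ := (∑ v, p' v) / ∑ v, c' v
  have hC : 0 < ∑ v, c' v := lt_of_lt_of_le (by positivity) hcost
  have hγ : 0 ≤ γ := div_nonneg (sum_nonneg fun v _ => hp v) hC.le
  have hγC : γ * ∑ v, c' v = ∑ v, p' v := div_mul_cancel₀ _ hC.ne'
  obtain ⟨S, hS, hSb, hSB, hSratio⟩ := exists_peeled_subtree hroot hacyc hp hc hproper
    (b := ε * B / 2) (by positivity) (by nlinarith) (ρ := ε * γ / 4) (κ := (2 + ε) * γ / 4)
    (by positivity) (fun x hx => by nlinarith) univ (fun _ _ => mem_univ _) hcost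
  have hSpos : 0 < ∑ v ∈ S, c' v := lt_of_lt_of_le (by positivity) hSb
  refine ⟨S, root_mem_of_mapsTo hacyc hS (nonempty_of_sum_ne_zero hSpos.ne'), fun v hv => hS hv,
    (le_div_iff₀ hSpos).2 ?_, hSb, by linarith⟩
  rcases hSratio with h | h
  · linarith
  · have hP : 0 ≤ (2 - ε) * ∑ v, p' v := mul_nonneg (by linarith) (sum_nonneg fun v _ => hp v)
    nlinarith [mul_nonneg hγ hSpos.le, congrArg (ε * ·) hγC]
end

section
/- Key fact for GAMW: given a delegation graph H_d, let g_max be a guru with the maximum accumulated weight α_d(g_max). For any losing coalition C ⊆ V\T_d(g_max) in the induced delegative simple game: if C ∪ T_d(g_max) is still a losing coalition, then for every guru g, C ∪ T_d(g) is also a losing coalition. -/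
open Finset
open scoped Classical

/-- The set of voters in the delegation tree rooted at `g` (those whose
delegation chain reaches `g`). -/
noncomputable def treeOf {V : Type*} [Fintype V] (d : V → V) (g : V) : Finset V :=
  (univ : Finset V).filter (fun l => ∃ k, d^[k] l = g)

/-! Adding the tree `T` of a guru to a coalition `C` can only activate the voters of `T`: a voter
of `C` outside `T` never delegates into `T`, so its activity is unchanged. Hence the active
weight grows by at most the weight of `T`, and by exactly that much when `T` is closed under
delegation (the root is a guru) and disjoint from `C`. Comparing with the heaviest tree gives
the claim. -/

section Delegation

variable {V : Type*} {d : V → V}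

lemma forall_iterate_mem_union_iff {C T : Finset V} (hT : Set.MapsTo d (T : Set V)ᶜ (T : Set V)ᶜ)
    {i : V} (hi : i ∉ T) : (∀ k, d^[k] i ∈ C ∪ T) ↔ ∀ k, d^[k] i ∈ C := by
  refine ⟨fun h k => (mem_union.1 (h k)).resolve_right (hT.iterate k hi), fun h k => ?_⟩
  exact mem_union_left _ (h k)

variable [Fintype V]

lemma mapsTo_treeOf {g : V} (hg : d g = g) :
    Set.MapsTo d (treeOf d g : Set V) (treeOf d g) := by
  intro i hi
  obtain ⟨k, hk⟩ := mem_filter.1 hi |>.2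
  refine mem_filter.2 ⟨mem_univ _, k, ?_⟩
  rw [← Function.iterate_succ_apply, Function.iterate_succ_apply', hk, hg]

lemma mapsTo_compl_treeOf (g : V) :
    Set.MapsTo d (treeOf d g : Set V)ᶜ (treeOf d g : Set V)ᶜ := by
  intro i hi hdi
  obtain ⟨k, hk⟩ := mem_filter.1 hdi |>.2
  exact hi (mem_filter.2 ⟨mem_univ _, k + 1, hk⟩)

lemma gamma_union_le (w : V → ℕ) (C : Finset V) {T : Finset V}
    (hT : Set.MapsTo d (T : Set V)ᶜ (T : Set V)ᶜ) :
    gamma w d (C ∪ T) ≤ gamma w d C + ∑ l ∈ T, w l := by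
  rw [gamma, ← sdiff_union_self_eq_union, sum_union sdiff_disjoint]
  gcongr with i hi i
  · calc ∑ i ∈ C \ T, (if ∀ k, d^[k] i ∈ C \ T ∪ T then w i else 0)
        = ∑ i ∈ C \ T, (if ∀ k, d^[k] i ∈ C then w i else 0) := by
          refine sum_congr rfl fun i hi => ?_
          rw [sdiff_union_self_eq_union, forall_iterate_mem_union_iff hT (mem_sdiff.1 hi).2]
      _ ≤ gamma w d C := sum_le_sum_of_subset sdiff_subset
  · split_ifs <;> omega

lemma gamma_union_of_disjoint (w : V → ℕ) {C T : Finset V} (hT : Set.MapsTo d (T : Set V) T)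
    (hT' : Set.MapsTo d (T : Set V)ᶜ (T : Set V)ᶜ) (hdisj : Disjoint C T) :
    gamma w d (C ∪ T) = gamma w d C + ∑ l ∈ T, w l := by
  rw [gamma, sum_union hdisj, gamma]
  congr 1
  · refine sum_congr rfl fun i hi => ?_
    rw [forall_iterate_mem_union_iff hT' (disjoint_left.1 hdisj hi)]
  · exact sum_congr rfl fun i hi => if_pos fun k => mem_union_right _ (hT.iterate k hi)

end Delegation

theorem stmt16_general {V : Type*} [Fintype V] (w : V → ℕ) (q : ℕ) (d : V → V)
    (gmax : V) (hgmax : d gmax = gmax)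
    (hmax : ∀ g, d g = g → ∑ l ∈ treeOf d g, w l ≤ ∑ l ∈ treeOf d gmax, w l)
    (C : Finset V) (hdisj : Disjoint C (treeOf d gmax))
    (hlose2 : ¬ wins w d q (C ∪ treeOf d gmax)) :
    ∀ g, d g = g → ¬ wins w d q (C ∪ treeOf d g) := by
  intro g hg hwin
  refine hlose2 ?_
  calc q ≤ gamma w d (C ∪ treeOf d g) := hwin
    _ ≤ gamma w d C + ∑ l ∈ treeOf d g, w l := gamma_union_le w C (mapsTo_compl_treeOf g)
    _ ≤ gamma w d C + ∑ l ∈ treeOf d gmax, w l := Nat.add_le_add_left (hmax g hg) _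
    _ = gamma w d (C ∪ treeOf d gmax) :=
      (gamma_union_of_disjoint w (mapsTo_treeOf hgmax) (mapsTo_compl_treeOf gmax) hdisj).symm

/-- Key fact for GAMW. Let gmax be a guru of maximum accumulated
weight. For any losing coalition C disjoint from T_d(gmax): if C ∪ T_d(gmax) is
still losing, then C ∪ T_d(g) is losing for every guru g. -/
theorem stmt16 {V : Type*} [Fintype V] (w : V → ℕ) (q : ℕ) (d : V → V)
    (hacyc : ∀ v, ∃ k, d (d^[k] v) = d^[k] v)
    (gmax : V) (hgmax : d gmax = gmax)
    (hmax : ∀ g, d g = g → ∑ l ∈ treeOf d g, w l ≤ ∑ l ∈ treeOf d gmax, w l)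
    (C : Finset V) (hdisj : Disjoint C (treeOf d gmax))
    (hlose : ¬ wins w d q C)
    (hlose2 : ¬ wins w d q (C ∪ treeOf d gmax)) :
    ∀ g, d g = g → ¬ wins w d q (C ∪ treeOf d g) :=
  stmt16_general w q d gmax hgmax hmax C hdisj hlose2
end

section
/- In the MMWP reduction instance (3D-matching gadget), with voters V_X ∪ V_Y ∪ V_Z where |X|=|Y|=|Z|=k, unit weights, quota q=3, and a delegation graph H_d in which every voter in V_Z is a guru and every other voter delegates (directly or indirectly) to some voter in V_Z: the minimum delegative Banzhaf measure over all voters is at least 2^(−k−1) if and only if every delegation subtree rooted at a vertex of V_Z has exactly 3 vertices (one from each of V_X, V_Y, V_Z). -/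
open Finset
open scoped Classical

/-! With unit weights and quota 3 a coalition wins iff at least three of its members have their
whole delegation chain inside it, and in the gadget the chain of `u` is `u, d u, d (d u)`.
Since `DB v = swingCount v / 2 ^ (3k - 1)`, the bound `2 ^ (-k-1)` means at least `2 ^ (2k - 2)`
swings.

If every tree `T` is a triple, a voter `v ∈ T` is a swing for `T \ {v}` together with any set of
the `2k - 2` non-gurus outside `T`. Conversely, if two V_X voters share a delegate, or (once
V_X → V_Y is bijective) two V_Y voters share a guru, some V_X voter `x` has a non-guru rival
`w ∉ {x, d x}` whose chain lies in that of `x`. A swing coalition of `x` has active set exactly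
`{d x, d (d x)}`, so it omits `w` and is determined by its other non-gurus: at most `2 ^ (2k - 3)`
swings. Hence both delegation maps V_X → V_Y and V_Y → V_Z are bijective, and every tree is a
triple.
-/

namespace Delegation

variable {V : Type*}

noncomputable def activeSet (d : V → V) (C : Finset V) : Finset V :=
  C.filter fun i => ∀ n, d^[n] i ∈ C

noncomputable def nonGurus [Fintype V] (d : V → V) : Finset V :=
  univ.filter fun u => d u ≠ u

variable {d : V → V}

theorem gamma_one_eq_card_activeSet [Fintype V] (d : V → V) (C : Finset V) :
    gamma (fun _ => 1) d C = (activeSet d C).card := by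
  rw [gamma, activeSet, card_filter]

theorem activeSet_insert_subset {x : V} (hx : ∀ u, d u ≠ x) (C : Finset V) :
    activeSet d (insert x C) ⊆ insert x (activeSet d C) := by
  intro i hi
  obtain ⟨hiC, hchain⟩ := mem_filter.mp hi
  by_cases hix : i = x
  · exact hix ▸ mem_insert_self _ _
  refine mem_insert_of_mem (mem_filter.mpr ⟨(mem_insert.mp hiC).resolve_left hix, fun n => ?_⟩)
  refine (mem_insert.mp (hchain n)).resolve_left ?_
  cases n with
  | zero => exact hix
  | succ m => rw [Function.iterate_succ_apply']; exact hx _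

theorem card_activeSet_add_one_and_mem_of_swing [Fintype V] {x : V} (hx : ∀ u, d u ≠ x)
    {q : ℕ} {C : Finset V} (h : swing (fun _ => 1) d q x C) :
    (activeSet d C).card + 1 = q ∧ x ∈ activeSet d (insert x C) := by
  obtain ⟨hlose, hwin⟩ := h
  simp only [wins, gamma_one_eq_card_activeSet, not_le] at hlose hwin
  have hle := (card_le_card (activeSet_insert_subset hx C)).trans (card_insert_le _ _)
  refine ⟨by omega, ?_⟩
  by_contra hxa
  have : activeSet d (insert x C) ⊆ activeSet d C := fun i hi =>
    (mem_insert.mp (activeSet_insert_subset hx C hi)).resolve_left (by rintro rfl; exact hxa hi)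
  have := card_le_card this
  omega

section DepthTwo

variable (hd : ∀ u, d (d (d u)) = d (d u))
include hd

theorem iterate_add_two (n : ℕ) (u : V) : d^[n + 2] u = d (d u) := by
  rw [Function.iterate_add_apply]
  exact Function.iterate_fixed (hd u) n

theorem mem_activeSet_iff {C : Finset V} {u : V} :
    u ∈ activeSet d C ↔ u ∈ C ∧ d u ∈ C ∧ d (d u) ∈ C := by
  refine ⟨fun h => ?_, fun ⟨h0, h1, h2⟩ => mem_filter.mpr ⟨h0, fun n => ?_⟩⟩
  · obtain ⟨h0, hchain⟩ := mem_filter.mp h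
    exact ⟨h0, hchain 1, hchain 2⟩
  · match n with
    | 0 => exact h0
    | 1 => exact h1
    | n + 2 => rw [iterate_add_two hd]; exact h2

theorem mem_treeOf_iff [Fintype V] {g u : V} (hg : d g = g) : u ∈ treeOf d g ↔ d (d u) = g := by
  refine ⟨fun h => ?_, fun h => mem_filter.mpr ⟨mem_univ _, 2, h⟩⟩
  obtain ⟨n, hn⟩ := (mem_filter.mp h).2
  rw [← iterate_add_two hd n, add_comm, Function.iterate_add_apply, hn]
  exact Function.iterate_fixed hg 2

theorem map_mem_treeOf [Fintype V] {g u : V} (hg : d g = g) (hu : u ∈ treeOf d g) :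
    d u ∈ treeOf d g := by
  rw [mem_treeOf_iff hd hg] at hu ⊢
  rw [hd, hu]

variable [Fintype V]

theorem swing_treeOf_erase_union {v : V} (hT : (treeOf d (d (d v))).card = 3) {S : Finset V}
    (hS : S ⊆ nonGurus d \ treeOf d (d (d v))) :
    swing (fun _ => 1) d 3 v ((treeOf d (d (d v))).erase v ∪ S) := by
  set T := treeOf d (d (d v))
  have hg : d (d (d v)) = d (d v) := hd v
  have hvT : v ∈ T := (mem_treeOf_iff hd hg).2 rfl
  have hSnonGuru : ∀ u ∈ S, d u ≠ u := fun u hu => (mem_filter.mp (mem_sdiff.mp (hS hu)).1).2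
  have hST : ∀ u ∈ S, u ∉ T := fun u hu => (mem_sdiff.mp (hS hu)).2
  refine ⟨?_, ?_⟩
  · have hsub : activeSet d (T.erase v ∪ S) ⊆ T.erase v := by
      intro u hu
      obtain ⟨huC, -, hgu⟩ := (mem_activeSet_iff hd).1 hu
      -- the only guru in `T.erase v ∪ S` is the root of `T`, so `u` lies in `T`
      have hguT : d (d u) ∈ T := by
        rcases mem_union.mp hgu with h | h
        · exact mem_of_mem_erase h
        · exact absurd (hd u) (hSnonGuru _ h)
      have huT : u ∈ T := by
        rw [mem_treeOf_iff hd hg] at hguT ⊢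
        rwa [hd, hd] at hguT
      exact (mem_union.mp huC).resolve_right fun h => hST u h huT
    have := card_le_card hsub
    rw [card_erase_of_mem hvT, hT] at this
    simp only [wins, gamma_one_eq_card_activeSet]
    omega
  · have hTC : T ⊆ insert v (T.erase v ∪ S) := by
      rw [← insert_union, insert_erase hvT]
      exact subset_union_left
    have hsub : T ⊆ activeSet d (insert v (T.erase v ∪ S)) := fun u hu =>
      have hdu := map_mem_treeOf hd hg hu
      (mem_activeSet_iff hd).2 ⟨hTC hu, hTC hdu, hTC (map_mem_treeOf hd hg hdu)⟩
    simp only [wins, gamma_one_eq_card_activeSet]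
    exact hT ▸ card_le_card hsub

theorem card_nonGurus_sdiff_treeOf {g : V} (hg : d g = g) :
    (nonGurus d \ treeOf d g).card = (nonGurus d).card - ((treeOf d g).card - 1) := by
  have hgT : g ∈ treeOf d g := (mem_treeOf_iff hd hg).2 (by rw [hg, hg])
  have hinter : treeOf d g ∩ nonGurus d = (treeOf d g).erase g := by
    ext u
    simp only [mem_inter, mem_erase, nonGurus, mem_filter, mem_univ, true_and]
    constructor
    · rintro ⟨hu, hdu⟩
      refine ⟨fun hug => hdu (hug ▸ hg), hu⟩
    · rintro ⟨hug, hu⟩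
      refine ⟨hu, fun hdu => hug ?_⟩
      rw [← (mem_treeOf_iff hd hg).1 hu, hdu, hdu]
  rw [card_sdiff, hinter, card_erase_of_mem hgT]

theorem two_pow_le_swingCount {v : V} (hT : (treeOf d (d (d v))).card = 3) :
    2 ^ ((nonGurus d).card - 2) ≤ swingCount (fun _ => 1) d 3 v := by
  set T := treeOf d (d (d v))
  have hvT : v ∈ T := (mem_treeOf_iff hd (hd v)).2 rfl
  have hdisj : ∀ S ∈ (nonGurus d \ T).powerset, Disjoint (T.erase v) S := fun S hS =>
    disjoint_left.mpr fun u hu huS =>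
      (mem_sdiff.mp (mem_powerset.mp hS huS)).2 (mem_of_mem_erase hu)
  calc 2 ^ ((nonGurus d).card - 2) = (nonGurus d \ T).powerset.card := by
        rw [card_powerset, card_nonGurus_sdiff_treeOf hd (hd v), hT]
    _ ≤ swingCount (fun _ => 1) d 3 v := by
        refine card_le_card_of_injOn (fun S => T.erase v ∪ S) (fun S hS => ?_) ?_
        · refine mem_filter.mpr ⟨mem_powerset.mpr fun u hu => mem_erase.mpr ⟨?_, mem_univ u⟩,
            swing_treeOf_erase_union hd hT (mem_powerset.mp hS)⟩
          rintro rfl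
          rcases mem_union.mp hu with h | h
          · exact notMem_erase _ _ h
          · exact (mem_sdiff.mp (mem_powerset.mp hS h)).2 hvT
        · intro S₁ hS₁ S₂ hS₂ h
          rw [← union_sdiff_cancel_left (hdisj S₁ hS₁),
            ← union_sdiff_cancel_left (hdisj S₂ hS₂)]
          exact congrArg (· \ T.erase v) h

section Leaf

variable {x : V} (hx : ∀ u, d u ≠ x) (hdx : d (d x) ≠ d x)
include hx hdx

theorem activeSet_eq_of_swing {C : Finset V} (h : swing (fun _ => 1) d 3 x C) :
    activeSet d C = {d x, d (d x)} := by
  obtain ⟨hcard, hxa⟩ := card_activeSet_add_one_and_mem_of_swing hx h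
  obtain ⟨-, hdxC, hddxC⟩ := (mem_activeSet_iff hd).1 hxa
  replace hdxC := (mem_insert.mp hdxC).resolve_left (hx x)
  replace hddxC := (mem_insert.mp hddxC).resolve_left (hx (d x))
  have hsub : {d x, d (d x)} ⊆ activeSet d C := by
    intro u hu
    rw [mem_activeSet_iff hd]
    rcases mem_insert_coe.mp hu with rfl | hu
    · exact ⟨hdxC, hddxC, (hd x).symm ▸ hddxC⟩
    · rw [mem_singleton.mp hu, hd x, hd x]
      exact ⟨hddxC, hddxC, hddxC⟩
  refine (eq_of_subset_of_card_le hsub ?_).symm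
  rw [card_pair hdx.symm]
  omega

theorem swingCount_le_of_rival {w : V} (hw : d w ≠ w) (hwx : w ≠ x) (hwdx : w ≠ d x)
    (hdw : d w = d x ∨ d w = d (d x)) :
    swingCount (fun _ => 1) d 3 x ≤ 2 ^ ((nonGurus d).card - 3) := by
  set R := nonGurus d \ {x, d x, w}
  have hR : R.card = (nonGurus d).card - 3 := by
    have hsub : {x, d x, w} ⊆ nonGurus d := by
      intro u hu
      simp only [mem_insert, mem_singleton] at hu
      refine mem_filter.mpr ⟨mem_univ u, ?_⟩
      rcases hu with rfl | rfl | rfl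
      exacts [hx u, hdx, hw]
    rw [card_sdiff_of_subset hsub,
      card_eq_three.mpr ⟨x, d x, w, (hx x).symm, hwx.symm, hwdx.symm, rfl⟩]
  have hpair : ∀ C ∈ ((univ : Finset V).erase x).powerset.filter (swing (fun _ => 1) d 3 x),
      {d x, d (d x)} ⊆ C := fun C hC => by
    rw [← activeSet_eq_of_swing hd hx hdx (mem_filter.mp hC).2]
    exact filter_subset _ _
  have hmaps : ∀ C ∈ ((univ : Finset V).erase x).powerset.filter (swing (fun _ => 1) d 3 x),
      C \ {d x, d (d x)} ⊆ R := by
    intro C hC u hu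
    have hact := activeSet_eq_of_swing hd hx hdx (mem_filter.mp hC).2
    obtain ⟨huC, huP⟩ := mem_sdiff.mp hu
    refine mem_sdiff.mpr ⟨mem_filter.mpr ⟨mem_univ u, fun hdu => huP ?_⟩, ?_⟩
    · rw [← hact, mem_activeSet_iff hd, hdu, hdu]
      exact ⟨huC, huC, huC⟩
    simp only [mem_insert, mem_singleton, not_or] at huP ⊢
    refine ⟨(mem_erase.mp (mem_powerset.mp (mem_filter.mp hC).1 huC)).1, huP.1, ?_⟩
    rintro rfl
    have hddu : d (d u) = d (d x) := by rcases hdw with h | h <;> simp only [h, hd x]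
    have hua : u ∈ activeSet d C := (mem_activeSet_iff hd).2
      ⟨huC, hpair C hC (by rcases hdw with h | h <;> simp [h]), hpair C hC (by simp [hddu])⟩
    rw [hact, mem_insert, mem_singleton] at hua
    rcases hua with h | h
    · exact hwdx h
    · exact hw (by rw [h, hd x])
  calc swingCount (fun _ => 1) d 3 x ≤ R.powerset.card := by
        refine card_le_card_of_injOn (· \ {d x, d (d x)})
          (fun C hC => mem_powerset.mpr (hmaps C hC)) fun C₁ hC₁ C₂ hC₂ h => ?_
        rw [← sdiff_union_of_subset (hpair C₁ hC₁),
          ← sdiff_union_of_subset (hpair C₂ hC₂)]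
        exact congrArg (· ∪ {d x, d (d x)}) h
    _ = 2 ^ ((nonGurus d).card - 3) := by rw [card_powerset, hR]

end Leaf

end DepthTwo

end Delegation

namespace MatchingGadget

open Delegation Function

variable {k : ℕ}

structure IsLayered (d : Fin 3 × Fin k → Fin 3 × Fin k) : Prop where
  fst_map_zero : ∀ a, (d (0, a)).1 = 1
  fst_map_one : ∀ b, (d (1, b)).1 = 2
  map_two : ∀ c, d (2, c) = (2, c)

def delegateX (d : Fin 3 × Fin k → Fin 3 × Fin k) (a : Fin k) : Fin k := (d (0, a)).2

def delegateY (d : Fin 3 × Fin k → Fin 3 × Fin k) (b : Fin k) : Fin k := (d (1, b)).2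

theorem one_div_two_pow_le_DB_iff (hk : 1 ≤ k) (w : Fin 3 × Fin k → ℕ)
    (d : Fin 3 × Fin k → Fin 3 × Fin k) (q : ℕ) (v : Fin 3 × Fin k) :
    (1 : ℚ) / 2 ^ (k + 1) ≤ DB w d q v ↔ 2 ^ (2 * k - 2) ≤ swingCount w d q v := by
  have h : (2 : ℚ) ^ (3 * k - 1) = 2 ^ (2 * k - 2) * 2 ^ (k + 1) := by
    rw [← pow_add]; congr 1; omega
  rw [DB, Fintype.card_prod, Fintype.card_fin, Fintype.card_fin, h,
    div_le_div_iff₀ (by positivity) (by positivity), one_mul,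
    mul_le_mul_iff_left₀ (by positivity)]
  exact_mod_cast Iff.rfl

variable {d : Fin 3 × Fin k → Fin 3 × Fin k} (hd : IsLayered d)
include hd

namespace IsLayered

theorem map_zero (a : Fin k) : d (0, a) = (1, delegateX d a) := Prod.ext (hd.fst_map_zero a) rfl

theorem map_one (b : Fin k) : d (1, b) = (2, delegateY d b) := Prod.ext (hd.fst_map_one b) rfl

theorem map_map_zero (a : Fin k) : d (d (0, a)) = (2, delegateY d (delegateX d a)) := by
  rw [hd.map_zero, hd.map_one]

theorem map_eq_self_iff {u : Fin 3 × Fin k} : d u = u ↔ u.1 = 2 := by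
  obtain ⟨s, t⟩ := u
  fin_cases s
  · simp [hd.map_zero, Prod.ext_iff]
  · simp [hd.map_one, Prod.ext_iff]
  · simp [hd.map_two]

theorem map_ne_zero (u : Fin 3 × Fin k) (a : Fin k) : d u ≠ (0, a) := by
  obtain ⟨s, t⟩ := u
  fin_cases s
  · simp [hd.map_zero]
  · simp [hd.map_one]
  · simp [hd.map_two]

theorem fst_map_map (u : Fin 3 × Fin k) : (d (d u)).1 = 2 := by
  obtain ⟨s, t⟩ := u
  fin_cases s
  · simp [hd.map_zero, hd.map_one]
  · simp [hd.map_one, hd.map_two]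
  · simp [hd.map_two]

theorem map_map_map (u : Fin 3 × Fin k) : d (d (d u)) = d (d u) :=
  hd.map_eq_self_iff.mpr (hd.fst_map_map u)

theorem card_nonGurus : (nonGurus d).card = 2 * k := by
  have : nonGurus d = ({0, 1} : Finset (Fin 3)) ×ˢ univ := by
    ext ⟨s, t⟩
    fin_cases s <;> simp [nonGurus, hd.map_eq_self_iff]
  rw [this, card_product, card_univ, Fintype.card_fin]
  rfl

theorem one_div_two_pow_le_DB (h3 : ∀ c : Fin k, (treeOf d (2, c)).card = 3)
    (v : Fin 3 × Fin k) : (1 : ℚ) / 2 ^ (k + 1) ≤ DB (fun _ => 1) d 3 v := by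
  rw [one_div_two_pow_le_DB_iff v.2.pos, ← hd.card_nonGurus]
  refine two_pow_le_swingCount hd.map_map_map ?_
  rw [← Prod.mk.eta (p := d (d v)), hd.fst_map_map]
  exact h3 _

theorem DB_lt_of_rival (hk : 2 ≤ k) (a : Fin k) {w : Fin 3 × Fin k} (hw : w.1 ≠ 2)
    (hwx : w ≠ (0, a)) (hwdx : w ≠ d (0, a)) (hdw : d w = d (0, a) ∨ d w = d (d (0, a))) :
    DB (fun _ => 1) d 3 (0, a) < (1 : ℚ) / 2 ^ (k + 1) := by
  rw [← not_le, one_div_two_pow_le_DB_iff (by omega), not_le]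
  have hdx : d (d (0, a)) ≠ d (0, a) := by rw [hd.map_map_zero, hd.map_zero]; simp
  calc swingCount (fun _ => 1) d 3 (0, a) ≤ 2 ^ ((nonGurus d).card - 3) :=
        swingCount_le_of_rival hd.map_map_map (fun u => hd.map_ne_zero u a) hdx
          (mt hd.map_eq_self_iff.mp hw) hwx hwdx hdw
    _ < 2 ^ (2 * k - 2) := by
        rw [hd.card_nonGurus]
        exact Nat.pow_lt_pow_right (by norm_num) (by omega)

theorem delegateX_injective (h : ∀ v, (1 : ℚ) / 2 ^ (k + 1) ≤ DB (fun _ => 1) d 3 v) :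
    Injective (delegateX d) := by
  intro a a' haa'
  by_contra hne
  have hk : 2 ≤ k := by
    have := a.isLt; have := a'.isLt; have := Fin.val_ne_of_ne hne; omega
  refine (h (0, a')).not_gt (hd.DB_lt_of_rival hk a' (w := (0, a)) (by simp) (by simpa using hne)
    (by simp [hd.map_zero]) (Or.inl ?_))
  rw [hd.map_zero, hd.map_zero, haa']

theorem delegateY_injective (h : ∀ v, (1 : ℚ) / 2 ^ (k + 1) ≤ DB (fun _ => 1) d 3 v) :
    Injective (delegateY d) := by
  intro b b' hbb'
  by_contra hne
  have hk : 2 ≤ k := by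
    have := b.isLt; have := b'.isLt; have := Fin.val_ne_of_ne hne; omega
  obtain ⟨a, rfl⟩ := Finite.injective_iff_surjective.mp (hd.delegateX_injective h) b
  refine (h (0, a)).not_gt (hd.DB_lt_of_rival hk a (w := (1, b')) (by simp) (by simp)
    (by simpa [hd.map_zero, eq_comm] using hne) (Or.inr ?_))
  rw [hd.map_one, hd.map_map_zero, hbb']

theorem card_treeOf_eq_three (hp : Injective (delegateX d)) (hr : Injective (delegateY d))
    (c : Fin k) : (treeOf d (2, c)).card = 3 := by
  obtain ⟨b, rfl⟩ := Finite.injective_iff_surjective.mp hr c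
  obtain ⟨a, rfl⟩ := Finite.injective_iff_surjective.mp hp b
  refine card_eq_three.mpr ⟨(0, a), (1, delegateX d a), (2, delegateY d (delegateX d a)),
    by simp, by simp, by simp, ?_⟩
  ext ⟨s, t⟩
  rw [mem_treeOf_iff hd.map_map_map (hd.map_two _)]
  fin_cases s
  · simp [hd.map_map_zero, hp.eq_iff, hr.eq_iff]
  · simp [hd.map_one, hd.map_two, hr.eq_iff]
  · simp [hd.map_two]

end IsLayered

end MatchingGadget

/-- In the MMWP 3D-matching gadget with voters
V_X ∪ V_Y ∪ V_Z = {0,1,2} × Fin k (|X| = |Y| = |Z| = k), unit weights, quota 3,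
where every V_X voter delegates to a V_Y voter, every V_Y voter delegates to a
V_Z voter, and every V_Z voter is a guru: the minimum delegative Banzhaf measure
over all voters is at least 2^(-k-1) iff every delegation subtree rooted at a
V_Z vertex has exactly 3 vertices. -/
theorem stmt17 (k : ℕ) (d : Fin 3 × Fin k → Fin 3 × Fin k)
    (hX : ∀ a : Fin k, (d (0, a)).1 = 1)
    (hY : ∀ a : Fin k, (d (1, a)).1 = 2)
    (hZ : ∀ a : Fin k, d (2, a) = (2, a)) :
    (∀ v : Fin 3 × Fin k, (1 : ℚ) / 2 ^ (k + 1) ≤ DB (fun _ => 1) d 3 v) ↔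
      (∀ a : Fin k, (treeOf d (2, a)).card = 3) := by
  have hd : MatchingGadget.IsLayered d := ⟨hX, hY, hZ⟩
  exact ⟨fun h => hd.card_treeOf_eq_three (hd.delegateX_injective h) (hd.delegateY_injective h),
    hd.one_div_two_pow_le_DB⟩
end

section
/- In the W[1]-hardness instance built from a graph G=(V,E) and integer k: voters are {i*} ∪ {u_v : v∈V} ∪ {w_e, w_e^1,...,w_e^k : e∈E}, all weight 1; initially d fixes every u_v, i*, w_e as gurus and d(w_e^j)=w_e; arcs allow u_v → i* and w_e → u_v for v ∈ e. With budget k̄ = |E| + |V| − k, the accumulated weight of i* can be made at least τ = (k+1)|E| + |V| − k + 1 by changing at most k̄ delegations if and only if the edges of G can be covered by at most |V| − k vertices, i.e., G has a vertex cover of size |V|−k, equivalently an independent set of size k. -/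
open Finset
open scoped Classical

private lemma aux_not_reach {α : Type*} {d : α → α} {x t : α} (hx : d x = x) (hxt : x ≠ t) :
    ¬ ∃ m, d^[m] x = t := by
  rintro ⟨m, hm⟩
  rw [Function.iterate_fixed hx] at hm
  exact hxt hm

private lemma aux_step {α : Type*} {d : α → α} {x y t : α} (hxy : d x = y) (hxt : x ≠ t)
    (h : ∃ m, d^[m] x = t) : ∃ m, d^[m] y = t := by
  obtain ⟨m, hm⟩ := h
  cases m with
  | zero => exact absurd hm hxt
  | succ n => rw [Function.iterate_succ_apply, hxy] at hm; exact ⟨n, hm⟩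

/-- W[1]-hardness instance for WMaxP built from a graph G and k.
Voters (all of weight 1): i* (= Sum.inl ()), u_v for v ∈ V(G) (= inr (inl v)),
and for each edge e the voters w_e (= inr (inr (e, 0))) and w_e^1,...,w_e^k
(= inr (inr (e, j)), j ≠ 0). Initially every voter is a guru except the w_e^j,
which delegate to w_e. Admissible delegations: u_v → i*, w_e → u_v for v ∈ e,
and w_e^j → w_e. The accumulated weight of i* (number of voters whose delegation
chain reaches i*) can be made at least τ = (k+1)|E| + |V| - k + 1 by changing at
most |E| + |V| - k delegations iff G has an independent set of size k. -/
theorem stmt19 {Vg : Type*} [Fintype Vg] [DecidableEq Vg]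
    (G : SimpleGraph Vg) [DecidableRel G.Adj] (k : ℕ) (hk : k ≤ Fintype.card Vg) :
    (∃ d' : (Unit ⊕ Vg ⊕ (↥G.edgeFinset × Fin (k + 1))) →
            (Unit ⊕ Vg ⊕ (↥G.edgeFinset × Fin (k + 1))),
      d' (Sum.inl ()) = Sum.inl () ∧
      (∀ v : Vg, d' (Sum.inr (Sum.inl v)) = Sum.inr (Sum.inl v) ∨
        d' (Sum.inr (Sum.inl v)) = Sum.inl ()) ∧
      (∀ e : ↥G.edgeFinset, ∀ j : Fin (k + 1),
        d' (Sum.inr (Sum.inr (e, j))) = Sum.inr (Sum.inr (e, j)) ∨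
        (j = 0 ∧ ∃ v : Vg, v ∈ (e : Sym2 Vg) ∧
          d' (Sum.inr (Sum.inr (e, j))) = Sum.inr (Sum.inl v)) ∨
        (j ≠ 0 ∧ d' (Sum.inr (Sum.inr (e, j))) = Sum.inr (Sum.inr (e, 0)))) ∧
      ((univ.filter (fun x => d' x ≠
          (fun y : Unit ⊕ Vg ⊕ (↥G.edgeFinset × Fin (k + 1)) =>
            match y with
            | Sum.inr (Sum.inr (e, j)) =>
                if j = 0 then Sum.inr (Sum.inr (e, j)) else Sum.inr (Sum.inr (e, 0))
            | y => y) x)).card ≤ G.edgeFinset.card + Fintype.card Vg - k) ∧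
      ((k + 1) * G.edgeFinset.card + Fintype.card Vg - k + 1 ≤
        (univ.filter (fun l : Unit ⊕ Vg ⊕ (↥G.edgeFinset × Fin (k + 1)) =>
          ∃ m : ℕ, d'^[m] l = Sum.inl ())).card)) ↔
    ∃ S : Finset Vg, S.card = k ∧ ∀ u ∈ S, ∀ v ∈ S, ¬ G.Adj u v := by
  have hcardX : Fintype.card (Unit ⊕ Vg ⊕ (↥G.edgeFinset × Fin (k + 1))) =
      1 + Fintype.card Vg + G.edgeFinset.card * (k + 1) := by
    simp only [Fintype.card_sum, Fintype.card_prod, Fintype.card_coe, Fintype.card_fin, Fintype.card_unit]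
    ring
  constructor
  · rintro ⟨d', h1, h2, h3, h4, h5⟩
    -- failure set
    set F := univ.filter (fun x : Unit ⊕ Vg ⊕ (↥G.edgeFinset × Fin (k + 1)) =>
      ¬ ∃ m, d'^[m] x = Sum.inl ()) with hFdef
    have hF : F.card ≤ k := by
      have hsplit := Finset.card_filter_add_card_filter_not
        (s := (univ : Finset (Unit ⊕ Vg ⊕ (↥G.edgeFinset × Fin (k + 1)))))
        (p := fun x => ∃ m, d'^[m] x = Sum.inl ())
      rw [card_univ, hcardX] at hsplit
      rw [← hFdef] at hsplit
      have hmul : (k + 1) * G.edgeFinset.card = G.edgeFinset.card * (k + 1) := mul_comm _ _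
      rw [hmul] at h5
      clear h4
      omega
    -- every w_{e,0} reaches i*
    have hw0 : ∀ e : ↥G.edgeFinset,
        ∃ m, d'^[m] (Sum.inr (Sum.inr (e, (0 : Fin (k + 1))))) = Sum.inl () := by
      intro e
      by_contra hno
      have hsub : ∀ j : Fin (k + 1),
          (Sum.inr (Sum.inr (e, j)) : Unit ⊕ Vg ⊕ (↥G.edgeFinset × Fin (k + 1))) ∈ F := by
        intro j
        simp only [hFdef, mem_filter, mem_univ, true_and]
        by_cases hj : j = 0
        · subst hj; exact hno
        · rcases h3 e j with h | ⟨hj0, _⟩ | ⟨_, hd⟩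
          · exact aux_not_reach h (by simp)
          · exact absurd hj0 hj
          · exact fun hr => hno (aux_step hd (by simp) hr)
      have hinj : Function.Injective
          (fun j : Fin (k + 1) =>
            (Sum.inr (Sum.inr (e, j)) : Unit ⊕ Vg ⊕ (↥G.edgeFinset × Fin (k + 1)))) := by
        intro a b hab; simpa using hab
      have hle : k + 1 ≤ F.card := by
        calc k + 1 = (univ.image (fun j : Fin (k + 1) =>
              (Sum.inr (Sum.inr (e, j)) : Unit ⊕ Vg ⊕ (↥G.edgeFinset × Fin (k + 1))))).card := by
              rw [Finset.card_image_of_injective _ hinj, card_univ, Fintype.card_fin]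
          _ ≤ F.card := by
              apply card_le_card
              intro x hx
              simp only [mem_image] at hx
              obtain ⟨j, _, rfl⟩ := hx
              exact hsub j
      omega
    -- the vertex each edge group delegates to is in the cover A
    have hcov : ∀ e : ↥G.edgeFinset, ∃ v, v ∈ (e : Sym2 Vg) ∧
        d' (Sum.inr (Sum.inl v)) = Sum.inl () ∧
        d' (Sum.inr (Sum.inr (e, (0 : Fin (k + 1))))) = Sum.inr (Sum.inl v) := by
      intro e
      rcases h3 e 0 with h | ⟨_, v, hv, hd⟩ | ⟨h0, _⟩
      · exact absurd (hw0 e) (aux_not_reach h (by simp))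
      · refine ⟨v, hv, ?_, hd⟩
        have hru : ∃ m, d'^[m] (Sum.inr (Sum.inl v)) = Sum.inl () :=
          aux_step hd (by simp) (hw0 e)
        rcases h2 v with h | h
        · exact absurd hru (aux_not_reach h (by simp))
        · exact h
      · exact absurd rfl h0
    set A := univ.filter (fun v : Vg => d' (Sum.inr (Sum.inl v)) = Sum.inl ()) with hAdef
    -- budget forces |A| ≤ |V| - k
    have hbud : G.edgeFinset.card + A.card ≤ G.edgeFinset.card + Fintype.card Vg - k := by
      refine le_trans ?_ h4
      have hsubset : (univ.image (fun e : ↥G.edgeFinset =>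
            (Sum.inr (Sum.inr (e, (0 : Fin (k + 1)))) :
              Unit ⊕ Vg ⊕ (↥G.edgeFinset × Fin (k + 1))))) ∪
          A.image (fun v => Sum.inr (Sum.inl v)) ⊆
          univ.filter (fun x => d' x ≠
            (fun y : Unit ⊕ Vg ⊕ (↥G.edgeFinset × Fin (k + 1)) =>
              match y with
              | Sum.inr (Sum.inr (e, j)) =>
                  if j = 0 then Sum.inr (Sum.inr (e, j)) else Sum.inr (Sum.inr (e, 0))
              | y => y) x) := by
        intro x hx
        simp only [mem_union, mem_image] at hx
        rcases hx with ⟨e, _, rfl⟩ | ⟨v, hv, rfl⟩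
        · obtain ⟨w, hw, hu, hd⟩ := hcov e
          simp only [mem_filter, mem_univ, true_and, hd]
          intro hcontra
          simp at hcontra
        · simp only [hAdef, mem_filter, mem_univ, true_and] at hv
          simp only [mem_filter, mem_univ, true_and, hv]
          intro hcontra
          simp at hcontra
      refine le_trans ?_ (card_le_card hsubset)
      rw [card_union_of_disjoint, Finset.card_image_of_injective, Finset.card_image_of_injective,
        card_univ, Fintype.card_coe]
      · intro a b hab; simpa using hab
      · intro a b hab; simpa using hab
      · rw [Finset.disjoint_left]
        intro x hx hx'
        simp only [mem_image] at hx hx'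
        obtain ⟨e, _, rfl⟩ := hx
        obtain ⟨v, _, h⟩ := hx'
        simp at h
    have hA : A.card ≤ Fintype.card Vg - k := by omega
    -- complement of A is independent
    have hS0card : k ≤ (univ \ A).card := by
      rw [card_sdiff_of_subset (subset_univ A), card_univ]
      omega
    obtain ⟨S, hSsub, hScard⟩ := Finset.exists_subset_card_eq hS0card
    refine ⟨S, hScard, ?_⟩
    intro u hu v hv hadj
    have he : s(u, v) ∈ G.edgeFinset := by
      rw [SimpleGraph.mem_edgeFinset]; exact hadj
    obtain ⟨w, hw, hdw, _⟩ := hcov ⟨s(u, v), he⟩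
    have hwA : w ∈ A := by simp only [hAdef, mem_filter, mem_univ, true_and]; exact hdw
    have : w = u ∨ w = v := by simpa [Sym2.mem_iff] using hw
    rcases this with rfl | rfl
    · have := hSsub hu; simp only [mem_sdiff] at this; exact this.2 hwA
    · have := hSsub hv; simp only [mem_sdiff] at this; exact this.2 hwA
  · rintro ⟨S, hScard, hSind⟩
    have hf0 : ∀ s : Sym2 Vg, s ∈ G.edgeSet → ∃ v, v ∈ s ∧ v ∉ S := by
      intro s
      induction s using Sym2.ind with
      | _ a b =>
        intro hs
        rw [SimpleGraph.mem_edgeSet] at hs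
        by_cases ha : a ∈ S
        · exact ⟨b, by simp, fun hb => hSind a ha b hb hs⟩
        · exact ⟨a, by simp, ha⟩
    have hfe : ∀ e : ↥G.edgeFinset, ∃ v, v ∈ (e : Sym2 Vg) ∧ v ∉ S := fun e =>
      hf0 e (SimpleGraph.mem_edgeFinset.mp e.2)
    choose f hf1 hf2 using hfe
    refine ⟨Sum.elim (fun _ => Sum.inl ())
      (Sum.elim (fun v => if v ∈ S then Sum.inr (Sum.inl v) else Sum.inl ())
        (fun p => if p.2 = (0 : Fin (k + 1)) then Sum.inr (Sum.inl (f p.1))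
          else Sum.inr (Sum.inr (p.1, 0)))), rfl, ?_, ?_, ?_, ?_⟩
    · intro v
      by_cases hv : v ∈ S
      · left; simp [hv]
      · right; simp [hv]
    · intro e j
      by_cases hj : j = 0
      · subst hj
        exact Or.inr (Or.inl ⟨rfl, f e, hf1 e, by simp⟩)
      · exact Or.inr (Or.inr ⟨hj, by simp [hj]⟩)
    · set U := ((univ \ S).image (fun v : Vg =>
          (Sum.inr (Sum.inl v) : Unit ⊕ Vg ⊕ (↥G.edgeFinset × Fin (k + 1))))) ∪
          (univ.image (fun e : ↥G.edgeFinset =>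
            (Sum.inr (Sum.inr (e, (0 : Fin (k + 1)))) :
              Unit ⊕ Vg ⊕ (↥G.edgeFinset × Fin (k + 1))))) with hU
      refine le_trans (card_le_card (t := U) ?_) ?_
      · intro x hx
        simp only [mem_filter, mem_univ, true_and] at hx
        rcases x with ⟨⟩ | v | ⟨e, j⟩
        · exact absurd rfl hx
        · by_cases hv : v ∈ S
          · exact absurd (by simp [hv]) hx
          · simp only [hU, mem_union, mem_image]
            exact Or.inl ⟨v, by simp [hv], rfl⟩
        · by_cases hj : j = 0
          · subst hj
            simp only [hU, mem_union, mem_image]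
            exact Or.inr ⟨e, mem_univ e, rfl⟩
          · exact absurd (by simp [hj]) hx
      · have hinj1 : Function.Injective (fun v : Vg =>
            (Sum.inr (Sum.inl v) : Unit ⊕ Vg ⊕ (↥G.edgeFinset × Fin (k + 1)))) := by
          intro a b hab; simpa using hab
        have hinj2 : Function.Injective (fun e : ↥G.edgeFinset =>
            (Sum.inr (Sum.inr (e, (0 : Fin (k + 1)))) :
              Unit ⊕ Vg ⊕ (↥G.edgeFinset × Fin (k + 1)))) := by
          intro a b hab; simpa using hab
        have hdisj : Disjoint ((univ \ S).image (fun v : Vg =>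
            (Sum.inr (Sum.inl v) : Unit ⊕ Vg ⊕ (↥G.edgeFinset × Fin (k + 1)))))
            (univ.image (fun e : ↥G.edgeFinset =>
              (Sum.inr (Sum.inr (e, (0 : Fin (k + 1)))) :
                Unit ⊕ Vg ⊕ (↥G.edgeFinset × Fin (k + 1))))) := by
          rw [Finset.disjoint_left]
          intro x hx hx'
          simp only [mem_image] at hx hx'
          obtain ⟨v, _, rfl⟩ := hx
          obtain ⟨e, _, h⟩ := hx'
          simp at h
        rw [hU, card_union_of_disjoint hdisj, Finset.card_image_of_injective _ hinj1,
          Finset.card_image_of_injective _ hinj2, card_sdiff_of_subset (subset_univ S), card_univ,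
          card_univ, Fintype.card_coe, hScard]
        omega
    · have hinj1 : Function.Injective (fun v : Vg =>
          (Sum.inr (Sum.inl v) : Unit ⊕ Vg ⊕ (↥G.edgeFinset × Fin (k + 1)))) := by
        intro a b hab; simpa using hab
      set T := univ \ (S.image (fun v : Vg =>
          (Sum.inr (Sum.inl v) : Unit ⊕ Vg ⊕ (↥G.edgeFinset × Fin (k + 1))))) with hT
      refine le_trans ?_ (card_le_card (s := T) ?_)
      · rw [hT, card_sdiff_of_subset (subset_univ _), card_univ,
          Finset.card_image_of_injective _ hinj1, hScard, hcardX]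
        have hmul : (k + 1) * G.edgeFinset.card = G.edgeFinset.card * (k + 1) := mul_comm _ _
        rw [hmul]
        omega
      · intro x hx
        simp only [hT, mem_sdiff, mem_image, mem_univ, true_and] at hx
        simp only [mem_filter, mem_univ, true_and]
        rcases x with ⟨⟩ | v | ⟨e, j⟩
        · exact ⟨0, rfl⟩
        · have hv : v ∉ S := fun h => hx ⟨v, h, rfl⟩
          exact ⟨1, by simp [hv]⟩
        · by_cases hj : j = 0
          · subst hj
            exact ⟨2, by simp [Function.iterate_succ_apply', hf2 e]⟩
          · exact ⟨3, by simp [Function.iterate_succ_apply', hj, hf2 e]⟩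
end
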